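/- Let S be a log-normal random variable, i.e., log S ~ N(u − σ²/2, σ²) with σ > 0. Then E[min(1, S)] = e^u · Φ(−u/σ − σ/2) + Φ(u/σ − σ/2), where Φ is the standard normal cumulative distribution function. -/

import Mathlib

/-!
Split at the threshold `a = σ/2 - u/σ`, where `S = 1`. Above it `min 1 S = 1`, which contributes
`P(Z > a) = Φ(-a)`. Below it `min 1 S = S`, and multiplying the standard normal density by
`exp (σ x - σ²/2)` turns it into the density of `N(σ, 1)` (exponential tilting), so the
contribution is `e^u P(N(σ, 1) ≤ a) = e^u Φ(a - σ)`.
-/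

open MeasureTheory ProbabilityTheory Set
open scoped NNReal

lemma exp_mul_mul_gaussianPDFReal (μ : ℝ) (v : ℝ≥0) (t x : ℝ) :
    Real.exp (t * x - (μ * t + v * t ^ 2 / 2)) * gaussianPDFReal μ v x
      = gaussianPDFReal (μ + v * t) v x := by
  rcases eq_or_ne v 0 with rfl | hv
  · simp [gaussianPDFReal]
  have hv' : (v : ℝ) ≠ 0 := by exact_mod_cast hv
  rw [gaussianPDFReal, gaussianPDFReal, mul_left_comm, ← Real.exp_add]
  congr 2
  field_simp
  ring

lemma setIntegral_exp_mul_gaussianReal (μ : ℝ) {v : ℝ≥0} (hv : v ≠ 0) (t : ℝ) {s : Set ℝ}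
    (hs : MeasurableSet s) :
    ∫ x in s, Real.exp (t * x - (μ * t + v * t ^ 2 / 2)) ∂gaussianReal μ v
      = (gaussianReal (μ + v * t) v s).toReal := by
  rw [← integral_indicator hs, integral_gaussianReal_eq_integral_smul hv,
    gaussianReal_apply_eq_integral _ hv, ENNReal.toReal_ofReal
      (setIntegral_nonneg hs fun x _ => gaussianPDFReal_nonneg _ _ x), ← integral_indicator hs]
  congr 1 with x
  by_cases hx : x ∈ s
  · rw [indicator_of_mem hx, indicator_of_mem hx, smul_eq_mul, mul_comm,
      exp_mul_mul_gaussianPDFReal]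
  · simp [hx]

lemma gaussianReal_Iic_eq_Iic_sub (μ : ℝ) (v : ℝ≥0) (a : ℝ) :
    gaussianReal μ v (Iic a) = gaussianReal 0 v (Iic (a - μ)) := by
  rw [← zero_add μ, ← gaussianReal_map_add_const, Measure.map_apply (by fun_prop) measurableSet_Iic,
    preimage_add_const_Iic, zero_add]

lemma gaussianReal_Ioi_eq_Iic_neg {v : ℝ≥0} (hv : v ≠ 0) (a : ℝ) :
    gaussianReal 0 v (Ioi a) = gaussianReal 0 v (Iic (-a)) := by
  have := nullSingletonClass_gaussianReal (μ := 0) hv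
  conv_lhs => rw [← neg_zero, ← gaussianReal_map_neg]
  rw [Measure.map_apply (by fun_prop) measurableSet_Ioi, ← measure_congr Iio_ae_eq_Iic]
  congr 1
  ext x
  simp

lemma integral_min_one_exp_gaussianReal {σ : ℝ} (hσ : 0 < σ) (u : ℝ) :
    ∫ x, min 1 (Real.exp (σ * x + u - σ ^ 2 / 2)) ∂gaussianReal 0 1
      = Real.exp u * (gaussianReal 0 1 (Iic (-u / σ - σ / 2))).toReal
        + (gaussianReal 0 1 (Iic (u / σ - σ / 2))).toReal := by
  set a := σ / 2 - u / σ
  have hexponent : ∀ x, σ * x + u - σ ^ 2 / 2 = σ * (x - a) := fun x => by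
    simp only [a]; field_simp; ring
  have hint : Integrable (fun x => min 1 (Real.exp (σ * x + u - σ ^ 2 / 2))) (gaussianReal 0 1) :=
    .of_bound (by fun_prop) 1 (ae_of_all _ fun x => by
      rw [Real.norm_of_nonneg (by positivity)]; exact min_le_left _ _)
  have below : ∫ x in Iic a, min 1 (Real.exp (σ * x + u - σ ^ 2 / 2)) ∂gaussianReal 0 1
      = Real.exp u * (gaussianReal 0 1 (Iic (-u / σ - σ / 2))).toReal := by
    have htilt := setIntegral_exp_mul_gaussianReal 0 one_ne_zero σ (measurableSet_Iic (a := a))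
    simp only [zero_mul, zero_add, NNReal.coe_one, one_mul] at htilt
    rw [setIntegral_congr_fun measurableSet_Iic
      (g := fun x => Real.exp u * Real.exp (σ * x - σ ^ 2 / 2)), integral_const_mul, htilt,
      gaussianReal_Iic_eq_Iic_sub]
    · congr 4; simp only [a]; ring
    · intro x hx
      have : σ * (x - a) ≤ 0 := mul_nonpos_of_nonneg_of_nonpos hσ.le (sub_nonpos.2 hx)
      dsimp only
      rw [min_eq_right (Real.exp_le_one_iff.2 (hexponent x ▸ this)), ← Real.exp_add]
      congr 1; ring
  have above : ∫ x in Ioi a, min 1 (Real.exp (σ * x + u - σ ^ 2 / 2)) ∂gaussianReal 0 1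
      = (gaussianReal 0 1 (Iic (u / σ - σ / 2))).toReal := by
    rw [setIntegral_congr_fun measurableSet_Ioi (g := fun _ => 1), setIntegral_const,
      smul_eq_mul, mul_one, measureReal_def, gaussianReal_Ioi_eq_Iic_neg one_ne_zero]
    · congr 3; simp only [a]; ring
    · intro x hx
      have : 0 ≤ σ * (x - a) := mul_nonneg hσ.le (sub_nonneg.2 hx.le)
      exact min_eq_left (Real.one_le_exp (hexponent x ▸ this))
  rw [← integral_add_compl measurableSet_Iic hint, compl_Iic, below, above]

theorem stmt5_general {Ω : Type*} [MeasurableSpace Ω] (μ : Measure Ω)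
    (Z : Ω → ℝ) (hZ : Measure.map Z μ = gaussianReal 0 1)
    (u σ : ℝ) (hσ : 0 < σ)
    (S : Ω → ℝ) (hS : S = fun ω => Real.exp (σ * Z ω + u - σ ^ 2 / 2))
    (Φ : ℝ → ℝ) (hΦ : Φ = fun x => ((gaussianReal 0 1) (Set.Iic x)).toReal) :
    ∫ ω, min 1 (S ω) ∂μ = Real.exp u * Φ (-u / σ - σ / 2) + Φ (u / σ - σ / 2) := by
  have hZlaw : HasLaw Z (gaussianReal 0 1) μ :=
    ⟨aemeasurable_of_map_neZero (by rw [hZ]; infer_instance), hZ⟩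
  subst hS hΦ
  rw [← integral_min_one_exp_gaussianReal hσ u,
    ← hZlaw.integral_comp (f := fun x => min 1 (Real.exp (σ * x + u - σ ^ 2 / 2))) (by fun_prop)]
  rfl

theorem stmt5 {Ω : Type*} [MeasurableSpace Ω] (μ : Measure Ω) [IsProbabilityMeasure μ]
    (Z : Ω → ℝ) (hZ : Measure.map Z μ = gaussianReal 0 1)
    (u σ : ℝ) (hσ : 0 < σ)
    (S : Ω → ℝ) (hS : S = fun ω => Real.exp (σ * Z ω + u - σ ^ 2 / 2))
    (Φ : ℝ → ℝ) (hΦ : Φ = fun x => ((gaussianReal 0 1) (Set.Iic x)).toReal) :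
    ∫ ω, min 1 (S ω) ∂μ = Real.exp u * Φ (-u / σ - σ / 2) + Φ (u / σ - σ / 2) :=
  stmt5_general μ Z hZ u σ hσ S hS Φ hΦ
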